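/- arXiv:1910.04246 — 5 statements merged into one kernel-verified Lean document; each statement's English description precedes it below -/
import Mathlib

section
/- Let R be a principal ideal domain and let C be a finitely generated free R-module equipped with an R-linear map ∂ : C → C satisfying ∂ ∘ ∂ = 0. Let H = ker ∂ / im ∂, regarded as a differential R-module with zero differential. Then there exists an R-linear map f : C → H such that f ∘ ∂ = 0 (so f is a chain map from (C, ∂) to (H, 0)) and f is a quasi-isomorphism; concretely, the restriction of f to ker ∂ is surjective onto H, and an element c ∈ ker ∂ satisfies f(c) = 0 if and only if c ∈ im ∂. -/
/-!
Since `C ⧸ ker ∂ ≅ im ∂` is a submodule of a finitely generated free module over a PID, it is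
free, so `ker ∂` is a direct summand of `C`. Composing a retraction `C → ker ∂` with the
projection `ker ∂ → H` gives the map: it kills `im ∂ ⊆ ker ∂`, and on cycles it is the
quotient map.
-/

open LinearMap

section

variable {R M : Type*} [Ring R] [AddCommGroup M] [Module R M]

theorem Submodule.exists_retraction_of_projective_quotient (K : Submodule R M)
    [Module.Projective R (M ⧸ K)] : ∃ r : M →ₗ[R] K, ∀ x : K, r x = x := by
  obtain ⟨s, hs⟩ := K.mkQ.exists_rightInverse_of_surjective K.range_mkQ
  have hsec (y : M ⧸ K) : K.mkQ (s y) = y := LinearMap.congr_fun hs y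
  have hmem (x : M) : x - s (K.mkQ x) ∈ K := by
    rw [← Submodule.Quotient.mk_eq_zero, Submodule.Quotient.mk_sub, sub_eq_zero]
    exact (hsec _).symm
  refine ⟨codRestrict K (LinearMap.id - s ∘ₗ K.mkQ) hmem, fun x => Subtype.ext ?_⟩
  simp [(Submodule.Quotient.mk_eq_zero K).2 x.2]

theorem exists_quasiIso_to_homology_of_retraction (d : M →ₗ[R] M) (hd : d ∘ₗ d = 0)
    (r : M →ₗ[R] ker d) (hr : ∀ x : ker d, r x = x) :
    ∃ f : M →ₗ[R] (ker d ⧸ (range d).comap (ker d).subtype),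
      f ∘ₗ d = 0 ∧
      (∀ h : ker d ⧸ (range d).comap (ker d).subtype, ∃ c ∈ ker d, f c = h) ∧
      (∀ c ∈ ker d, (f c = 0 ↔ c ∈ range d)) := by
  set B := (range d).comap (ker d).subtype
  have hr_mk (c : M) (hc : c ∈ ker d) : B.mkQ (r c) = B.mkQ ⟨c, hc⟩ := by
    rw [← hr ⟨c, hc⟩]
  refine ⟨B.mkQ ∘ₗ r, ?_, ?_, ?_⟩
  · ext x
    have hdx : d x ∈ ker d := by rw [mem_ker, ← comp_apply, hd, LinearMap.zero_apply]
    simp [hr_mk _ hdx, B]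
  · intro h
    obtain ⟨⟨c, hc⟩, rfl⟩ := B.mkQ_surjective h
    exact ⟨c, hc, hr_mk c hc⟩
  · intro c hc
    rw [comp_apply, hr_mk c hc, Submodule.mkQ_apply, Submodule.Quotient.mk_eq_zero]
    rfl

end

/-- **Formality of differential modules over a PID.**  If `C` is a finitely generated free module
over a PID `R` with an `R`-linear differential `∂` (so `∂ ∘ ∂ = 0`), and
`H = ker ∂ ⧸ im ∂` is its homology, then there is an `R`-linear chain map
`f : (C, ∂) → (H, 0)` (i.e. `f ∘ ∂ = 0`) which is a quasi-isomorphism: the restriction of `f`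
to `ker ∂` surjects onto `H`, and a cycle is sent to `0` exactly when it is a boundary. -/
theorem pid_differential_module_formal
    (R : Type) [CommRing R] [IsDomain R] [IsPrincipalIdealRing R]
    (C : Type) [AddCommGroup C] [Module R C] [Module.Free R C] [Module.Finite R C]
    (d : C →ₗ[R] C) (hd : d ∘ₗ d = 0) :
    ∃ f : C →ₗ[R]
        (LinearMap.ker d ⧸ (LinearMap.range d).comap (LinearMap.ker d).subtype),
      f ∘ₗ d = 0 ∧
      (∀ h : LinearMap.ker d ⧸ (LinearMap.range d).comap (LinearMap.ker d).subtype,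
        ∃ c ∈ LinearMap.ker d, f c = h) ∧
      (∀ c ∈ LinearMap.ker d, (f c = 0 ↔ c ∈ LinearMap.range d)) := by
  have : Module.Free R (C ⧸ ker d) := .of_equiv d.quotKerEquivRange.symm
  obtain ⟨r, hr⟩ := (ker d).exists_retraction_of_projective_quotient
  exact exists_quasiIso_to_homology_of_retraction d hd r hr
end

section
/- Let R be a principal ideal domain and let C be a finitely generated free R-module equipped with an R-linear map ∂ : C → C satisfying ∂ ∘ ∂ = 0. Then C decomposes as a direct sum of two-step complexes and trivial summands: there exist natural numbers p and m, a basis b₁, …, b_p, c₁, …, c_p, d₁, …, d_m of C over R, and elements q₁, …, q_p ∈ R, such that ∂(bᵢ) = qᵢ · cᵢ for all i, ∂(cᵢ) = 0 for all i, and ∂(dⱼ) = 0 for all j. -/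
/-!
Since `∂ ∘ ∂ = 0`, the range of `∂` lies in its kernel, and the Smith normal form of this pair of
submodules of the free module `C` gives a basis `(cⱼ)` of `ker ∂` such that the `qᵢ • cᵢ` form a
basis of `range ∂`. Lifting those through `∂` to elements `bᵢ`, the `bᵢ` together with the `cⱼ`
form a basis of `C`, because `∂` identifies `C ⧸ ker ∂` with `range ∂`.
-/

open Module Submodule LinearMap

namespace LinearMap

variable {R M N ι κ : Type*} [Ring R] [AddCommGroup M] [AddCommGroup N] [Module R M] [Module R N]
  {f : M →ₗ[R] N} (bR : Basis ι R (range f)) {x : ι → M} (hx : ∀ i, f (x i) = bR i)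
  (bK : Basis κ R (ker f))

include hx

theorem linearIndependent_sumElim_lift_range_ker :
    LinearIndependent R (Sum.elim x fun j ↦ (bK j : M)) := by
  have hxq : LinearIndependent R ((ker f).mkQ ∘ x) := by
    refine .of_comp (f.quotKerEquivRange : M ⧸ ker f →ₗ[R] range f) ?_
    convert bR.linearIndependent using 1
    ext i : 1
    exact Subtype.ext (hx i)
  simpa only [Sum.elim_swap] using
    (bK.linearIndependent.sumElim_of_quotient x hxq).comp Sum.swap Sum.swap_leftInverse.injective

theorem span_sumElim_lift_range_ker :
    span R (Set.range (Sum.elim x fun j ↦ (bK j : M))) = ⊤ := by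
  set S := span R (Set.range (Sum.elim x fun j ↦ (bK j : M)))
  have hker : ker f ≤ S := by
    rw [← map_subtype_top (ker f), ← bK.span_eq, map_span]
    exact span_mono (by rintro _ ⟨_, ⟨j, rfl⟩, rfl⟩; exact ⟨Sum.inr j, rfl⟩)
  have hrange : range f ≤ map f S := by
    rw [← map_subtype_top (range f), ← bR.span_eq, map_span, map_span]
    exact span_mono (by rintro _ ⟨_, ⟨i, rfl⟩, rfl⟩; exact ⟨x i, ⟨Sum.inl i, rfl⟩, hx i⟩)
  rw [range_eq_map, LinearMap.map_le_map_iff, sup_eq_left.mpr hker] at hrange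
  exact eq_top_iff.mpr hrange

noncomputable def basisLiftRangeSumKer : Basis (ι ⊕ κ) R M :=
  .mk (linearIndependent_sumElim_lift_range_ker bR hx bK)
    (span_sumElim_lift_range_ker bR hx bK).ge

@[simp]
theorem basisLiftRangeSumKer_inl (i : ι) : basisLiftRangeSumKer bR hx bK (.inl i) = x i :=
  Basis.mk_apply ..

@[simp]
theorem basisLiftRangeSumKer_inr (j : κ) : basisLiftRangeSumKer bR hx bK (.inr j) = bK j :=
  Basis.mk_apply ..

end LinearMap

/-- **Decomposition of a differential module over a PID into two-step complexes.**
If `C` is a finitely generated free module over a PID `R` and `∂ : C → C` is an `R`-linear map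
with `∂ ∘ ∂ = 0`, then there are `p, m : ℕ`, a basis `b₁, …, b_p, c₁, …, c_p, d₁, …, d_m` of
`C`, and scalars `q₁, …, q_p ∈ R` with `∂ bᵢ = qᵢ • cᵢ`, `∂ cᵢ = 0` and `∂ dⱼ = 0`. -/
theorem pid_differential_module_two_step_decomposition
    (R : Type) [CommRing R] [IsDomain R] [IsPrincipalIdealRing R]
    (C : Type) [AddCommGroup C] [Module R C] [Module.Free R C] [Module.Finite R C]
    (d : C →ₗ[R] C) (hd : d ∘ₗ d = 0) :
    ∃ (p m : ℕ) (B : Module.Basis (Fin p ⊕ Fin p ⊕ Fin m) R C) (q : Fin p → R),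
      (∀ i : Fin p, d (B (Sum.inl i)) = q i • B (Sum.inr (Sum.inl i))) ∧
      (∀ i : Fin p, d (B (Sum.inr (Sum.inl i))) = 0) ∧
      (∀ j : Fin m, d (B (Sum.inr (Sum.inr j))) = 0) := by
  obtain ⟨p, k, hpk, bK, bR, q, hsnf⟩ := (range d).exists_smith_normal_form_of_le
    (Free.chooseBasis R C) (ker d) (range_le_ker_iff.mpr hd)
  choose x hx using fun i ↦ (bR i).2
  let e : Fin p ⊕ Fin (k - p) ≃ Fin k := finSumFinEquiv.trans (finCongr (by omega))
  have he (i : Fin p) : e (.inl i) = Fin.castLE hpk i := rfl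
  let B := (basisLiftRangeSumKer bR hx bK).reindex ((Equiv.refl _).sumCongr e.symm)
  refine ⟨p, k - p, B, q, fun i ↦ ?_, fun i ↦ by simp [B], fun j ↦ by simp [B]⟩
  simp [B, hx, hsnf, he]
end

section
/- Let F be a field, let S = F[ε] be the ring of dual numbers over F (i.e. F[X]/(X²) with ε² = 0), and let M be an S-module that is finite-dimensional as an F-vector space. Then M is a free S-module if and only if dim_F(M) = 2·dim_F(ε·M), where ε·M denotes the image of the F-linear map M → M given by multiplication by ε. -/
/-!
Multiplication by `ε` squares to zero, so `εM ≤ ker ε`, and by rank–nullity the dimension condition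
says exactly that `ker ε = εM`. In a free module this holds coordinatewise, because `ker ε = εS`
in `S = F[ε]`. Conversely, if `ker ε = εM`, take `v` whose images `ε • v i` form an `F`-basis of
`εM`. Applying `ε` to a relation among the `v i` and then reading off the remaining `ε`-part shows
that `v` is `S`-linearly independent. If `P` is the `S`-span of `v`, then `εM = εP`, so
`M = P + ker ε = P + εM ⊆ P`.
-/

open TrivSqZeroExt

namespace DualNumber

section CommRing

variable {R : Type*} [CommRing R]

theorem eq_eps_mul_inl_snd_of_eps_mul_eq_zero {s : R[ε]} (h : ε * s = 0) :
    s = ε * inl s.snd := by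
  have hfst : s.fst = 0 := by simpa using congrArg snd h
  ext <;> simp [hfst]

theorem smul_eq_fst_smul_add_snd_smul_eps_smul {M : Type*} [AddCommGroup M] [Module R M]
    [Module R[ε] M] [IsScalarTower R R[ε] M] (s : R[ε]) (x : M) :
    s • x = s.fst • x + s.snd • (ε : R[ε]) • x := by
  have hs : s = s.fst • 1 + s.snd • ε := by ext <;> simp
  conv_lhs => rw [hs]
  rw [add_smul, smul_assoc, smul_assoc, one_smul]

theorem eps_smul_smul {M : Type*} [AddCommGroup M] [Module R M]
    [Module R[ε] M] [IsScalarTower R R[ε] M] (s : R[ε]) (x : M) :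
    (ε : R[ε]) • s • x = s.fst • (ε : R[ε]) • x := by
  rw [smul_smul, ← smul_assoc]
  congr 1
  ext <;> simp

theorem exists_eps_smul_eq_of_eps_smul_eq_zero {M : Type*} [AddCommGroup M] [Module R[ε] M]
    [Module.Free R[ε] M] {m : M} (hm : (ε : R[ε]) • m = 0) : ∃ n : M, (ε : R[ε]) • n = m := by
  let b := Module.Free.chooseBasis R[ε] M
  have hcoord : ∀ i, ε * b.repr m i = 0 := fun i => by
    simpa using congrArg (b.repr · i) hm
  refine ⟨(b.repr m).sum fun i (s : R[ε]) => (inl s.snd : R[ε]) • b i, ?_⟩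
  conv_rhs => rw [← b.linearCombination_repr m]
  rw [Finsupp.smul_sum, Finsupp.linearCombination_apply]
  refine Finsupp.sum_congr fun i _ => ?_
  rw [smul_smul, ← eq_eps_mul_inl_snd_of_eps_mul_eq_zero (hcoord i)]

theorem linearIndependent_of_linearIndependent_eps_smul {ι M : Type*} [AddCommGroup M]
    [Module R M] [Module R[ε] M] [IsScalarTower R R[ε] M] {v : ι → M}
    (hv : LinearIndependent R fun i => (ε : R[ε]) • v i) : LinearIndependent R[ε] v := by
  rw [linearIndependent_iff'] at hv ⊢
  intro s g hg i hi
  have hfst : ∀ i ∈ s, (g i).fst = 0 := by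
    refine hv s (fun i => (g i).fst) ?_
    have := congrArg ((ε : R[ε]) • ·) hg
    simpa [Finset.smul_sum, eps_smul_smul] using this
  have hsnd : ∀ i ∈ s, (g i).snd = 0 := by
    refine hv s (fun i => (g i).snd) ?_
    rw [← hg]
    refine Finset.sum_congr rfl fun j hj => ?_
    rw [smul_eq_fst_smul_add_snd_smul_eps_smul (g j), hfst j hj, zero_smul, zero_add]
  ext
  exacts [hfst i hi, hsnd i hi]

theorem span_eq_top_of_eps_smul_mem_span {ι M : Type*} [AddCommGroup M]
    [Module R M] [Module R[ε] M] [IsScalarTower R R[ε] M] {v : ι → M}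
    (hexact : ∀ m : M, (ε : R[ε]) • m = 0 → ∃ n : M, (ε : R[ε]) • n = m)
    (hv : ∀ m : M, (ε : R[ε]) • m ∈ Submodule.span R (Set.range fun i => (ε : R[ε]) • v i)) :
    Submodule.span R[ε] (Set.range v) = ⊤ := by
  set P := Submodule.span R[ε] (Set.range v)
  have hlift : ∀ m : M, ∃ p ∈ P, (ε : R[ε]) • p = (ε : R[ε]) • m := by
    have hle : Submodule.span R (Set.range fun i => (ε : R[ε]) • v i) ≤
        (P.restrictScalars R).map (DistribSMul.toLinearMap R M (ε : R[ε])) :=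
      Submodule.span_le.mpr <| Set.range_subset_iff.mpr fun i =>
        ⟨v i, Submodule.subset_span ⟨i, rfl⟩, rfl⟩
    exact fun m => hle (hv m)
  have heps_mem : ∀ m : M, (ε : R[ε]) • m ∈ P := fun m => by
    obtain ⟨p, hp, hpm⟩ := hlift m
    exact hpm ▸ P.smul_mem _ hp
  refine eq_top_iff.mpr fun m _ => ?_
  obtain ⟨p, hp, hpm⟩ := hlift m
  obtain ⟨n, hn⟩ := hexact (m - p) (by rw [smul_sub, hpm, sub_self])
  rw [← sub_add_cancel m p, ← hn]
  exact P.add_mem (heps_mem n) hp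

end CommRing

theorem free_iff_forall_exists_eps_smul_eq {F M : Type*} [Field F] [AddCommGroup M]
    [Module F M] [Module F[ε] M] [IsScalarTower F F[ε] M] :
    Module.Free F[ε] M ↔ ∀ m : M, (ε : F[ε]) • m = 0 → ∃ n : M, (ε : F[ε]) • n = m := by
  refine ⟨fun _ _ => exists_eps_smul_eq_of_eps_smul_eq_zero, fun hexact => ?_⟩
  obtain ⟨κ, a, -, hspan, hli⟩ := exists_linearIndependent' F fun m : M => (ε : F[ε]) • m
  have hv (m : M) : (ε : F[ε]) • m ∈ Submodule.span F (Set.range fun i => (ε : F[ε]) • a i) :=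
    hspan ▸ Submodule.subset_span ⟨m, rfl⟩
  exact Module.Free.of_basis <| Module.Basis.mk (linearIndependent_of_linearIndependent_eps_smul hli)
    (span_eq_top_of_eps_smul_mem_span hexact hv).ge

end DualNumber

theorem LinearMap.ker_le_range_iff_finrank_eq_two_mul {K V : Type*} [DivisionRing K]
    [AddCommGroup V] [Module K V] [FiniteDimensional K V] {f : V →ₗ[K] V}
    (hf : LinearMap.range f ≤ LinearMap.ker f) :
    LinearMap.ker f ≤ LinearMap.range f ↔
      Module.finrank K V = 2 * Module.finrank K (LinearMap.range f) := by
  have hrank := LinearMap.finrank_range_add_finrank_ker f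
  refine ⟨fun h => ?_, fun h => ?_⟩
  · rw [le_antisymm h hf] at hrank
    omega
  · exact (Submodule.eq_of_le_of_finrank_eq hf (by omega)).ge

/-- **Freeness over the dual numbers via dimensions.**  Let `F` be a field, `S = F[ε]` the ring
of dual numbers over `F`, and `M` an `S`-module which is finite dimensional as an `F`-vector
space.  Then `M` is a free `S`-module if and only if `dim_F M = 2·dim_F(ε·M)`, where `ε·M`
is the image of the `F`-linear endomorphism of `M` given by multiplication by `ε`. -/
theorem free_over_dual_numbers_iff_dim
    (F : Type) [Field F]
    (M : Type) [AddCommGroup M] [Module F M]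
    [Module (DualNumber F) M] [IsScalarTower F (DualNumber F) M]
    [Module.Finite F M]
    (epsM : M →ₗ[F] M)
    (hepsM : ∀ m : M, epsM m = (DualNumber.eps : DualNumber F) • m) :
    Module.Free (DualNumber F) M ↔
      Module.finrank F M = 2 * Module.finrank F (LinearMap.range epsM) := by
  have hsq : LinearMap.range epsM ≤ LinearMap.ker epsM := by
    rintro _ ⟨m, rfl⟩
    rw [LinearMap.mem_ker, hepsM, hepsM, smul_smul, DualNumber.eps_mul_eps, zero_smul]
  rw [DualNumber.free_iff_forall_exists_eps_smul_eq,
    ← LinearMap.ker_le_range_iff_finrank_eq_two_mul hsq]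
  simp only [SetLike.le_def, LinearMap.mem_ker, LinearMap.mem_range, hepsM]
end

section
/- Let k be a commutative ring, let (D_n)_{n ∈ ℕ} be a family of Hasse derivatives on the Laurent polynomial ring k[T, T⁻¹], let a ∈ k be a unit, and let φ : k[T, T⁻¹] → k be a k-algebra homomorphism with φ(T) = a. If p ∈ k[T, T⁻¹] satisfies φ(D_n(p)) = 0 for every n ∈ ℕ, then p = 0. -/
/-!
Write `p = ∑ cₘ Tᵐ`. Since `φ (Tᵐ)` is a unit and `φ (Tᵐ⁻ⁿ) φ (Tⁿ) = φ (Tᵐ)`, the hypothesis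
says `∑ₘ cₘ φ (Tᵐ) binom(m, n) = 0` for every `n`. By Vandermonde's identity these relations
survive shifting all exponents `m` by a common integer. Once the exponents lie in `[0, d]` with
the largest one equal to `d`, the relation for `n = d` isolates the top coefficient, which
therefore vanishes; induction on the support kills the rest.
-/

open LaurentPolynomial Finset

section BinomialSums

variable {k : Type*} [Ring k]

lemma Int.choose_eq_zero_of_lt {m : ℤ} {n : ℕ} (h₀ : 0 ≤ m) (h : m < n) :
    Ring.choose m n = 0 := by
  lift m to ℕ using h₀
  rw [Ring.choose_natCast, Nat.choose_eq_zero_of_lt (by omega), Nat.cast_zero]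

lemma Int.choose_natCast_self (n : ℕ) : Ring.choose (n : ℤ) n = 1 := by
  rw [Ring.choose_natCast, Nat.choose_self, Nat.cast_one]

lemma sum_mul_choose_add_eq_zero {S : Finset ℤ} {f : ℤ → k}
    (h : ∀ n : ℕ, ∑ m ∈ S, f m * ((Ring.choose m n : ℤ) : k) = 0) (s : ℤ) (n : ℕ) :
    ∑ m ∈ S, f m * ((Ring.choose (m + s) n : ℤ) : k) = 0 := by
  simp_rw [fun m ↦ Ring.add_choose_eq n (Commute.all m s), Int.cast_sum, Int.cast_mul,
    mul_sum]
  rw [sum_comm]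
  refine sum_eq_zero fun ij _ ↦ ?_
  simp_rw [← mul_assoc, ← sum_mul, h, zero_mul]

lemma eq_zero_of_sum_mul_choose_eq_zero {S : Finset ℤ} {f : ℤ → k}
    (h : ∀ n : ℕ, ∑ m ∈ S, f m * ((Ring.choose m n : ℤ) : k) = 0) :
    ∀ m ∈ S, f m = 0 := by
  classical
  induction S using Finset.induction_on_max with
  | empty => simp
  | insert M S hlt ih =>
    have hM : M ∉ S := fun hM ↦ (hlt M hM).false
    obtain ⟨L, hL⟩ := (insert M S).bddBelow
    have hLM : L ≤ M := hL (mem_insert_self M S)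
    -- After shifting by `-L`, `binom(x - L, M - L)` vanishes for every `x ∈ S`.
    have hfM : f M = 0 := by
      obtain ⟨d, hd⟩ := Int.eq_ofNat_of_zero_le (sub_nonneg.2 hLM)
      have hsum := sum_mul_choose_add_eq_zero h (-L) d
      rw [sum_insert hM, sum_eq_zero fun x hx ↦ ?_, add_zero, ← sub_eq_add_neg, hd,
        Int.choose_natCast_self, Int.cast_one, mul_one] at hsum
      · exact hsum
      · have hLx : L ≤ x := hL (mem_insert_of_mem hx)
        rw [Int.choose_eq_zero_of_lt (by omega) (by have := hlt x hx; omega), Int.cast_zero,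
          mul_zero]
    have hS : ∀ n : ℕ, ∑ m ∈ S, f m * ((Ring.choose m n : ℤ) : k) = 0 := fun n ↦ by
      simpa [sum_insert hM, hfM] using h n
    simpa [hfM] using ih hS

end BinomialSums

lemma LaurentPolynomial.map_eq_sum_coeff_smul_T {R M : Type*} [Semiring R] [AddCommMonoid M]
    [Module R M] (L : R[T;T⁻¹] →ₗ[R] M) (p : R[T;T⁻¹]) :
    L p = ∑ m ∈ p.coeff.support, p.coeff m • L (T m) := by
  conv_lhs => rw [← AddMonoidAlgebra.sum_coeff_single p]
  simp only [Finsupp.sum, map_sum, single_eq_C_mul_T, ← smul_eq_C_mul, map_smul]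

theorem laurent_poly_eq_zero_of_hasse_derivs_vanish_general
    (k : Type) [CommRing k]
    (D : ℕ → (LaurentPolynomial k →ₗ[k] LaurentPolynomial k))
    (hD : ∀ (n : ℕ) (m : ℤ),
      D n (T m) = ((Ring.choose m n : ℤ) : k) • T (m - n))
    (φ : LaurentPolynomial k →ₐ[k] k)
    (p : LaurentPolynomial k) (hp : ∀ n : ℕ, φ (D n p) = 0) :
    p = 0 := by
  have hsum (n : ℕ) :
      ∑ m ∈ p.coeff.support, p.coeff m * φ (T m) * ((Ring.choose m n : ℤ) : k) = 0 :=
    calc _ = φ (D n p) * φ (T n) := by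
          rw [show φ (D n p) = (φ.toLinearMap ∘ₗ D n) p from rfl, map_eq_sum_coeff_smul_T,
            sum_mul]
          refine sum_congr rfl fun m _ ↦ ?_
          have hT : φ (T m) = φ (T (m - n)) * φ (T n) := by
            rw [← map_mul, ← T_add, sub_add_cancel]
          rw [LinearMap.comp_apply, hD, AlgHom.toLinearMap_apply, map_smul, smul_eq_mul,
            smul_eq_mul, hT]
          ring
      _ = 0 := by rw [hp n, zero_mul]
  have hcoeff := eq_zero_of_sum_mul_choose_eq_zero hsum
  ext m
  by_cases hm : m ∈ p.coeff.support
  · exact ((isUnit_T m).map φ).mul_left_eq_zero.1 (hcoeff m hm)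
  · simpa using hm

/-- **Vanishing of all Hasse derivatives at a unit detects the zero Laurent polynomial.**
Let `k` be a commutative ring, `(D_n)` a family of Hasse derivatives on `k[T,T⁻¹]`
(`k`-linear maps with `D_n(T^m) = binom(m,n)·T^(m−n)`), `a ∈ k` a unit, and
`φ : k[T,T⁻¹] → k` a `k`-algebra homomorphism with `φ(T) = a`.  If `φ(D_n(p)) = 0` for all
`n`, then `p = 0`. -/
theorem laurent_poly_eq_zero_of_hasse_derivs_vanish
    (k : Type) [CommRing k]
    (D : ℕ → (LaurentPolynomial k →ₗ[k] LaurentPolynomial k))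
    (hD : ∀ (n : ℕ) (m : ℤ),
      D n (T m) = ((Ring.choose m n : ℤ) : k) • T (m - n))
    (a : k) (ha : IsUnit a)
    (φ : LaurentPolynomial k →ₐ[k] k) (hφ : φ (T 1) = a)
    (p : LaurentPolynomial k) (hp : ∀ n : ℕ, φ (D n p) = 0) :
    p = 0 :=
  laurent_poly_eq_zero_of_hasse_derivs_vanish_general k D hD φ p hp
end

section
/- Work over the field ℤ/2. Let p ∈ (ℤ/2)[t] be a polynomial with p.eval(1) = 0, and let (q_n)_{n ≥ 1} be a sequence of polynomials in (ℤ/2)[t] satisfying (1 + t)·q_1 = p and (1 + t)·q_{n+1} = q_n + C(q_n.eval(1)) for all n ≥ 1, where C(c) denotes the constant polynomial c (note that over ℤ/2 one has 1 − t = 1 + t, so q_1 = p/(1−t) and q_{n+1} = (q_n(1) − q_n)/(1−t)). Then for every n ≥ 1, q_n.eval(1) = (hasseDeriv n p).eval(1). -/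
open Polynomial

/-!
Over `ℤ/2` we have `1 + X = X - 1`, and the Leibniz rule for Hasse derivatives gives
`D^{k+1}((X - a) f) = (X - a) D^{k+1} f + D^k f`, so evaluating at `a` shifts the order by one:
`(D^{k+1}((X - a) f))(a) = (D^k f)(a)`. Constants are killed by `D^{k+1}`, hence dividing by
`X - a` after subtracting any constant lowers the Hasse derivative order by one at `a`, and
inductively `(D^m q_n)(1) = (D^{m+n} p)(1)`; take `m = 0`.
-/

theorem Polynomial.hasseDeriv_succ_X_sub_C_mul {R : Type*} [CommRing R] (a : R) (f : R[X])
    (k : ℕ) :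
    hasseDeriv (k + 1) ((X - C a) * f) = (X - C a) * hasseDeriv (k + 1) f + hasseDeriv k f := by
  rw [hasseDeriv_mul, Finset.Nat.sum_antidiagonal_succ, hasseDeriv_zero',
    Finset.sum_eq_single (0, k)]
  · simp
  · rintro ⟨_ | i, j⟩ hij hne
    · simp_all
    · have hdeg : (X - C a).natDegree < i + 1 + 1 := (natDegree_X_sub_C_le a).trans_lt (by omega)
      rw [hasseDeriv_eq_zero_of_lt_natDegree _ _ hdeg, zero_mul]
  · simp

theorem Polynomial.eval_hasseDeriv_succ_X_sub_C_mul {R : Type*} [CommRing R] (a : R) (f : R[X])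
    (k : ℕ) : (hasseDeriv (k + 1) ((X - C a) * f)).eval a = (hasseDeriv k f).eval a := by
  simp [hasseDeriv_succ_X_sub_C_mul]

theorem eval_hasseDeriv_of_iterated_quotients {R : Type*} [CommRing R] (a : R) (p : R[X])
    (q : ℕ → R[X]) (c : ℕ → R) (hq1 : (X - C a) * q 1 = p)
    (hq : ∀ n, 1 ≤ n → (X - C a) * q (n + 1) = q n + C (c n)) (n : ℕ) (hn : 1 ≤ n) (m : ℕ) :
    (hasseDeriv m (q n)).eval a = (hasseDeriv (m + n) p).eval a := by
  induction n, hn using Nat.le_induction generalizing m with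
  | base => rw [← hq1, eval_hasseDeriv_succ_X_sub_C_mul]
  | succ n hn ih =>
    calc (hasseDeriv m (q (n + 1))).eval a
        = (hasseDeriv (m + 1) (q n + C (c n))).eval a := by
          rw [← hq n hn, eval_hasseDeriv_succ_X_sub_C_mul]
      _ = (hasseDeriv (m + 1 + n) p).eval a := by
          rw [map_add, hasseDeriv_C _ _ m.succ_pos, add_zero, ih]
      _ = (hasseDeriv (m + (n + 1)) p).eval a := by rw [Nat.add_right_comm, Nat.add_assoc]

theorem eval_one_of_inductive_quotients_eq_hasseDeriv_general
    (p : Polynomial (ZMod 2))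
    (q : ℕ → Polynomial (ZMod 2))
    (hq1 : (1 + X) * q 1 = p)
    (hq : ∀ n : ℕ, 1 ≤ n → (1 + X) * q (n + 1) = q n + C ((q n).eval 1)) :
    ∀ n : ℕ, 1 ≤ n → (q n).eval 1 = (Polynomial.hasseDeriv n p).eval 1 := by
  have h1X : (1 + X : (ZMod 2)[X]) = X - C 1 := by
    rw [CharTwo.sub_eq_add, map_one, add_comm]
  rw [h1X] at hq1 hq
  intro n hn
  simpa only [hasseDeriv_zero', zero_add] using
    eval_hasseDeriv_of_iterated_quotients 1 p q _ hq1 hq n hn 0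

/-- **The inductively defined polynomials `q_n` compute Hasse derivatives at `1`.**
Over `ℤ/2`, let `p` be a polynomial with `p.eval 1 = 0` and let `(q_n)_{n ≥ 1}` satisfy
`(1 + X)·q₁ = p` and `(1 + X)·q_{n+1} = q_n + C (q_n.eval 1)` for `n ≥ 1` (over `ℤ/2`,
`1 − t = 1 + t`).  Then `q_n.eval 1 = (hasseDeriv n p).eval 1` for every `n ≥ 1`. -/
theorem eval_one_of_inductive_quotients_eq_hasseDeriv
    (p : Polynomial (ZMod 2)) (hp : p.eval 1 = 0)
    (q : ℕ → Polynomial (ZMod 2))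
    (hq1 : (1 + X) * q 1 = p)
    (hq : ∀ n : ℕ, 1 ≤ n → (1 + X) * q (n + 1) = q n + C ((q n).eval 1)) :
    ∀ n : ℕ, 1 ≤ n → (q n).eval 1 = (Polynomial.hasseDeriv n p).eval 1 :=
  eval_one_of_inductive_quotients_eq_hasseDeriv_general p q hq1 hq
end
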